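/- If the SWAP test on a density matrix ρ on H ⊗ H rejects with probability α (i.e., accepts with probability 1 - α), then the trace distance between the two reduced states of ρ satisfies dist(Tr_2(ρ), Tr_1(ρ)) ≤ 3√α. -/

import Mathlib

open Finset
open scoped ComplexOrder

noncomputable section

/-- The swap matrix on `H ⊗ H`. -/
def swapMatrix (ι : Type*) [Fintype ι] [DecidableEq ι] : Matrix (ι × ι) (ι × ι) ℂ :=
  Matrix.of fun p q => if p.1 = q.2 ∧ p.2 = q.1 then 1 else 0

/-- Partial trace over the first tensor factor. -/
def ptraceFst {ι κ : Type*} [Fintype ι] (M : Matrix (ι × κ) (ι × κ) ℂ) : Matrix κ κ ℂ :=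
  Matrix.of fun j j' => ∑ i, M (i, j) (i, j')

/-- Partial trace over the second tensor factor. -/
def ptraceSnd {ι κ : Type*} [Fintype κ] (M : Matrix (ι × κ) (ι × κ) ℂ) : Matrix ι ι ℂ :=
  Matrix.of fun i i' => ∑ j, M (i, j) (i', j)

/-- The outer product `|ψ⟩⟨φ|`. -/
def outer {n : Type*} (ψ φ : n → ℂ) : Matrix n n ℂ :=
  Matrix.of fun p q => ψ p * star (φ q)

/-- The trace norm `‖A‖_tr = Tr √(AᴴA)`. -/
def traceNorm {n : Type*} [Fintype n] [DecidableEq n] (A : Matrix n n ℂ) : ℝ :=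
  (((Matrix.posSemidef_conjTranspose_mul_self A).1.eigenvectorUnitary.1 *
      Matrix.diagonal ((fun x : ℝ => (x : ℂ)) ∘ (Real.sqrt ·) ∘ (Matrix.posSemidef_conjTranspose_mul_self A).1.eigenvalues) *
      (star (Matrix.posSemidef_conjTranspose_mul_self A).1.eigenvectorUnitary : Matrix n n ℂ)).trace).re

/-- The trace distance between two states. -/
def traceDist {n : Type*} [Fintype n] [DecidableEq n] (ρ σ : Matrix n n ℂ) : ℝ :=
  (1 / 2) * traceNorm (ρ - σ)

/-!
Write `Δ = Tr₂ ρ - Tr₁ ρ`. It is Hermitian and traceless, so `‖Δ‖_tr = 2 Tr (M Δ)` for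
the projection `M` onto its positive eigenspace, and `Tr (M Δ) = Tr (N ρ)` with
`N = M ⊗ 1 - 1 ⊗ M`. Conjugation by the swap `S` negates `N`, hence `P N P = 0` for the
accepting projection `P = (1 + S) / 2` of the SWAP test. Splitting `ρ` along `P` and
`Q = 1 - P`, the two off-diagonal terms of `Tr (N ρ)` are bounded by Cauchy–Schwarz and
`N² ≤ 1`, and the `Q`-block by `N ≤ 1`:
`Tr (N ρ) ≤ 2 √(Tr (P ρ) Tr (Q ρ)) + Tr (Q ρ) ≤ 2 √α + α ≤ 3 √α`.
-/

open Matrix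
open scoped Kronecker MatrixOrder

section StarProjection

variable {R : Type*} [Ring R]

lemma IsStarProjection.sub_mul_self_le_one [StarRing R] [PartialOrder R] [StarOrderedRing R]
    {p q : R} (hp : IsStarProjection p) (hq : IsStarProjection q) (hpq : Commute p q) :
    (p - q) * (p - q) ≤ 1 := by
  have h : (p - q) * (p - q) = (p + q - p * q) - p * q := by
    rw [sub_mul, mul_sub, mul_sub, hp.isIdempotentElem.eq, hq.isIdempotentElem.eq, hpq.symm.eq]
    abel
  rw [h]
  exact (sub_le_self _ (hp.mul hq hpq).nonneg).trans (hp.add_sub_mul_of_commute hpq hq).le_one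

variable [Algebra ℂ R] {s : R}

lemma IsSelfAdjoint.isStarProjection_inv_two_smul_one_add [StarRing R] [StarModule ℂ R]
    (hs : IsSelfAdjoint s) (hss : s * s = 1) : IsStarProjection ((2 : ℂ)⁻¹ • (1 + s)) where
  isSelfAdjoint := by
    simp [IsSelfAdjoint, star_smul, hs.star_eq]
  isIdempotentElem := by
    rw [IsIdempotentElem, smul_mul_smul_comm, add_mul, mul_add, mul_add, hss]
    simp only [one_mul, mul_one]
    module

lemma inv_two_smul_one_add_mul_mul_eq_zero (hss : s * s = 1) {x : R} (hsx : s * x * s = -x) :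
    (2 : ℂ)⁻¹ • (1 + s) * x * ((2 : ℂ)⁻¹ • (1 + s)) = 0 := by
  have hxs : x * s = -(s * x) := by
    calc x * s = s * (s * x * s) := by simp only [← mul_assoc, hss, one_mul]
      _ = -(s * x) := by rw [hsx, mul_neg]
  have h : (1 + s) * x * (1 + s) = 0 := by
    rw [add_mul, add_mul, mul_add, mul_add, hsx, one_mul, mul_one, mul_one, hxs]
    abel
  rw [smul_mul_assoc, mul_smul_comm, smul_mul_assoc, h, smul_zero, smul_zero]

end StarProjection

namespace Matrix

variable {𝕜 n : Type*} [RCLike 𝕜] [Fintype n] [DecidableEq n]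

lemma IsHermitian.trace_cfc {A : Matrix n n 𝕜} (hA : A.IsHermitian) (f : ℝ → ℝ) :
    (cfc f A).trace = ∑ i, (f (hA.eigenvalues i) : 𝕜) := by
  rw [hA.cfc_eq, IsHermitian.cfc, Unitary.conjStarAlgAut_apply, trace_mul_cycle,
    Unitary.coe_star_mul_self, one_mul, trace_diagonal]
  rfl

lemma isStarProjection_cfc (A : Matrix n n 𝕜) {f : ℝ → ℝ}
    (hf : ∀ x, f x * f x = f x) : IsStarProjection (cfc f A) where
  isIdempotentElem := by
    rw [IsIdempotentElem, ← cfc_mul f f A (finite_real_spectrum.continuousOn _)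
      (finite_real_spectrum.continuousOn _)]
    simp only [hf]
  isSelfAdjoint := cfc_predicate f A

lemma le_one_of_mul_self_le_one {N : Matrix n n 𝕜} (hN : N.IsHermitian) (hNN : N * N ≤ 1) :
    N ≤ 1 := by
  have h : 1 - N = (2⁻¹ : ℝ) • ((1 - N)ᴴ * (1 - N) + (1 - N * N)) := by
    rw [conjTranspose_sub, conjTranspose_one, hN.eq, sub_mul, mul_sub, mul_sub, one_mul,
      mul_one, one_mul]
    module
  rw [le_iff, h]
  exact ((posSemidef_conjTranspose_mul_self _).add (le_iff.mp hNN)).smul (by norm_num)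

end Matrix

lemma IsStarProjection.kronecker {m n : Type*} [Fintype m] [Fintype n] {A : Matrix m m ℂ}
    {B : Matrix n n ℂ} (hA : IsStarProjection A) (hB : IsStarProjection B) :
    IsStarProjection (A ⊗ₖ B) where
  isSelfAdjoint := by
    rw [IsSelfAdjoint, star_eq_conjTranspose, conjTranspose_kronecker, ← star_eq_conjTranspose,
      ← star_eq_conjTranspose, hA.isSelfAdjoint.star_eq, hB.isSelfAdjoint.star_eq]
  isIdempotentElem := by
    rw [IsIdempotentElem, ← mul_kronecker_mul, hA.isIdempotentElem.eq, hB.isIdempotentElem.eq]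

lemma IsStarProjection.kronecker_sub_mul_self_le_one {ι : Type*} [Fintype ι] [DecidableEq ι]
    {M : Matrix ι ι ℂ} (hM : IsStarProjection M) :
    (M ⊗ₖ 1 - 1 ⊗ₖ M) * (M ⊗ₖ 1 - 1 ⊗ₖ M) ≤ 1 :=
  (hM.kronecker (.one _)).sub_mul_self_le_one ((IsStarProjection.one _).kronecker hM)
    (by simp [Commute, SemiconjBy, ← mul_kronecker_mul])

section TraceNorm

variable {n : Type*} [Fintype n] [DecidableEq n]

lemma traceNorm_eq_re_trace_cfc_sqrt (A : Matrix n n ℂ) :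
    traceNorm A = (cfc Real.sqrt (Aᴴ * A)).trace.re := by
  rw [(posSemidef_conjTranspose_mul_self A).1.cfc_eq]
  rfl

lemma Matrix.IsHermitian.traceNorm_eq_sum_abs_eigenvalues {A : Matrix n n ℂ}
    (hA : A.IsHermitian) : traceNorm A = ∑ i, |hA.eigenvalues i| := by
  have hsqrt : cfc Real.sqrt (Aᴴ * A) = cfc (fun x : ℝ => |x|) A := by
    have hsq : cfc (fun x : ℝ => x * x) A = A * A := by
      rw [cfc_mul (fun x : ℝ => x) (fun x : ℝ => x) A, cfc_id' ℝ A]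
    simp_rw [hA.eq, ← hsq, ← Real.sqrt_mul_self_eq_abs]
    exact (cfc_comp Real.sqrt (fun x : ℝ => x * x) A).symm
  rw [traceNorm_eq_re_trace_cfc_sqrt, hsqrt, hA.trace_cfc, Complex.re_sum]
  rfl

lemma Matrix.IsHermitian.exists_isStarProjection_traceNorm_eq {A : Matrix n n ℂ}
    (hA : A.IsHermitian) (hA0 : A.trace = 0) :
    ∃ M : Matrix n n ℂ, IsStarProjection M ∧ traceNorm A = 2 * (M * A).trace.re := by
  let f : ℝ → ℝ := fun x => if 0 < x then 1 else 0
  refine ⟨cfc f A, isStarProjection_cfc A fun x => by by_cases hx : 0 < x <;> simp [f, hx], ?_⟩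
  have hMA : cfc f A * A = cfc (fun x => f x * x) A := by
    rw [cfc_mul f (fun x => x) A (finite_real_spectrum.continuousOn _), cfc_id' ℝ A]
  have hsum : ∑ i, hA.eigenvalues i = 0 := by
    simpa [hA.trace_eq_sum_eigenvalues] using congrArg Complex.re hA0
  rw [hA.traceNorm_eq_sum_abs_eigenvalues, hMA, hA.trace_cfc, Complex.re_sum]
  calc ∑ i, |hA.eigenvalues i| = ∑ i, (2 * (f (hA.eigenvalues i) * hA.eigenvalues i)
        - hA.eigenvalues i) := by
        refine Finset.sum_congr rfl fun i _ => ?_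
        by_cases hi : 0 < hA.eigenvalues i
        · simp [f, hi, abs_of_pos hi]; ring
        · simp [f, hi, abs_of_nonpos (not_lt.mp hi)]
    _ = 2 * ∑ i, f (hA.eigenvalues i) * hA.eigenvalues i := by
        rw [Finset.sum_sub_distrib, hsum, sub_zero, Finset.mul_sum]

end TraceNorm

section TraceInequalities

variable {n : Type*} [Fintype n]

lemma Matrix.PosSemidef.re_trace_mul_mul_conjTranspose_le {ρ : Matrix n n ℂ}
    (hρ : ρ.PosSemidef) (X Y : Matrix n n ℂ) :
    (Y * ρ * Xᴴ).trace.re ≤ √(X * ρ * Xᴴ).trace.re * √(Y * ρ * Yᴴ).trace.re := by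
  let := ρ.toMatrixSeminormedAddCommGroup hρ
  let := ρ.toMatrixInnerProductSpace hρ
  have hnorm (Z : Matrix n n ℂ) : ‖Z‖ = √(Z * ρ * Zᴴ).trace.re := by
    rw [norm_eq_sqrt_re_inner (𝕜 := ℂ)]
    rfl
  rw [← hnorm, ← hnorm]
  exact re_inner_le_norm (𝕜 := ℂ) X Y

lemma Matrix.PosSemidef.re_trace_mul_le_re_trace_mul_of_le [DecidableEq n] {ρ X Y : Matrix n n ℂ}
    (hρ : ρ.PosSemidef) (hXY : X ≤ Y) : (X * ρ).trace.re ≤ (Y * ρ).trace.re := by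
  obtain ⟨C, hC⟩ := CStarAlgebra.nonneg_iff_eq_star_mul_self.mp (sub_nonneg.mpr hXY)
  have h : ((Y - X) * ρ).trace = (C * ρ * Cᴴ).trace := by
    rw [hC, mul_assoc, trace_mul_comm, mul_assoc, ← mul_assoc]
    rfl
  have := (hρ.mul_mul_conjTranspose_same C).trace_nonneg
  rw [← h, sub_mul, trace_sub] at this
  simpa using (Complex.nonneg_iff.mp this).1

end TraceInequalities

section Compression

variable {n : Type*} [Fintype n] [DecidableEq n]

lemma Matrix.PosSemidef.re_trace_mul_le_of_mul_mul_eq_zero {ρ P N : Matrix n n ℂ}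
    (hρ : ρ.PosSemidef) (hP : IsStarProjection P) (hN : N.IsHermitian) (hPNP : P * N * P = 0)
    (hNN : N * N ≤ 1) :
    (N * ρ).trace.re ≤
      2 * (√(P * ρ).trace.re * √((1 - P) * ρ).trace.re) + ((1 - P) * ρ).trace.re := by
  set Q := 1 - P
  have hQ : IsStarProjection Q := hP.one_sub
  have hPh : Pᴴ = P := hP.isSelfAdjoint
  have hQh : Qᴴ = Q := hQ.isSelfAdjoint
  have hN' : N = P * N * Q + Q * N * P + Q * N * Q := by
    have h : (P + Q) * N * (P + Q) = P * N * P + P * N * Q + Q * N * P + Q * N * Q := by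
      noncomm_ring
    rwa [add_sub_cancel, one_mul, mul_one, hPNP, zero_add] at h
  have hPρ : (P * ρ * Pᴴ).trace = (P * ρ).trace := by
    rw [hPh, trace_mul_cycle, hP.isIdempotentElem.eq]
  have hNQρ : (N * Q * ρ * (N * Q)ᴴ).trace.re ≤ (Q * ρ).trace.re := by
    have hle : Q * (N * N) * Q ≤ Q := by
      simpa [hQ.isSelfAdjoint.star_eq, hQ.isIdempotentElem.eq]
        using star_left_conjugate_le_conjugate hNN Q
    rw [conjTranspose_mul, hN.eq, hQh, trace_mul_cycle]
    simpa only [mul_assoc] using hρ.re_trace_mul_le_re_trace_mul_of_le hle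
  have hNQ : √(N * Q * ρ * (N * Q)ᴴ).trace.re ≤ √(Q * ρ).trace.re :=
    Real.sqrt_le_sqrt hNQρ
  have hPNQ : (P * N * Q * ρ).trace.re ≤ √(P * ρ).trace.re * √(Q * ρ).trace.re := by
    have h : (P * N * Q * ρ).trace = (N * Q * ρ * Pᴴ).trace := by
      rw [hPh, mul_assoc, mul_assoc, trace_mul_comm]
      simp only [mul_assoc]
    rw [h, ← hPρ]
    exact (hρ.re_trace_mul_mul_conjTranspose_le P (N * Q)).trans
      (mul_le_mul_of_nonneg_left hNQ (Real.sqrt_nonneg _))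
  have hQNP : (Q * N * P * ρ).trace.re ≤ √(P * ρ).trace.re * √(Q * ρ).trace.re := by
    have h : (Q * N * P * ρ).trace = (P * ρ * (N * Q)ᴴ).trace := by
      rw [conjTranspose_mul, hN.eq, hQh, mul_assoc (Q * N), trace_mul_comm]
    rw [h, ← hPρ, mul_comm]
    exact (hρ.re_trace_mul_mul_conjTranspose_le (N * Q) P).trans
      (mul_le_mul_of_nonneg_right hNQ (Real.sqrt_nonneg _))
  have hQNQ : (Q * N * Q * ρ).trace.re ≤ (Q * ρ).trace.re := by
    have hle : Q * N * Q ≤ Q := by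
      simpa [hQ.isSelfAdjoint.star_eq, hQ.isIdempotentElem.eq]
        using star_left_conjugate_le_conjugate (le_one_of_mul_self_le_one hN hNN) Q
    exact hρ.re_trace_mul_le_re_trace_mul_of_le hle
  rw [hN', add_mul, add_mul, trace_add, trace_add, Complex.add_re, Complex.add_re]
  linarith

end Compression

section PartialTrace

variable {ι κ : Type*}

lemma trace_ptraceFst [Fintype ι] [Fintype κ] (X : Matrix (ι × κ) (ι × κ) ℂ) :
    (ptraceFst X).trace = X.trace := by
  simp only [trace, ptraceFst, diag_apply, of_apply, Fintype.sum_prod_type]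
  exact Finset.sum_comm

lemma trace_ptraceSnd [Fintype ι] [Fintype κ] (X : Matrix (ι × κ) (ι × κ) ℂ) :
    (ptraceSnd X).trace = X.trace := by
  simp only [trace, ptraceSnd, diag_apply, of_apply, Fintype.sum_prod_type]

lemma Matrix.IsHermitian.ptraceFst [Fintype ι] {X : Matrix (ι × κ) (ι × κ) ℂ}
    (hX : X.IsHermitian) : (ptraceFst X).IsHermitian := by
  ext j j'
  simp only [_root_.ptraceFst, conjTranspose_apply, of_apply, star_sum]
  exact Finset.sum_congr rfl fun i _ => by rw [← conjTranspose_apply, hX.eq]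

lemma Matrix.IsHermitian.ptraceSnd [Fintype κ] {X : Matrix (ι × κ) (ι × κ) ℂ}
    (hX : X.IsHermitian) : (ptraceSnd X).IsHermitian := by
  ext i i'
  simp only [_root_.ptraceSnd, conjTranspose_apply, of_apply, star_sum]
  exact Finset.sum_congr rfl fun j _ => by rw [← conjTranspose_apply, hX.eq]

lemma trace_mul_ptraceFst [Fintype ι] [Fintype κ] [DecidableEq ι] (M : Matrix κ κ ℂ)
    (X : Matrix (ι × κ) (ι × κ) ℂ) :
    (M * ptraceFst X).trace = ((1 ⊗ₖ M) * X).trace := by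
  simp only [trace, ptraceFst, diag_apply, mul_apply, of_apply, mul_sum, kroneckerMap_apply,
    one_apply, ite_mul, one_mul, zero_mul, Fintype.sum_prod_type, sum_ite_irrel, sum_const_zero,
    sum_ite_eq, mem_univ, ↓reduceIte]
  conv_lhs => enter [2, i]; rw [Finset.sum_comm]
  exact Finset.sum_comm

lemma trace_mul_ptraceSnd [Fintype ι] [Fintype κ] [DecidableEq κ] (M : Matrix ι ι ℂ)
    (X : Matrix (ι × κ) (ι × κ) ℂ) :
    (M * ptraceSnd X).trace = ((M ⊗ₖ 1) * X).trace := by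
  simp only [trace, ptraceSnd, diag_apply, mul_apply, of_apply, mul_sum, kroneckerMap_apply,
    one_apply, mul_ite, mul_one, mul_zero, ite_mul, zero_mul, Fintype.sum_prod_type, sum_ite_eq,
    mem_univ, ↓reduceIte]
  exact Finset.sum_congr rfl fun i _ => Finset.sum_comm

end PartialTrace

section Swap

variable {ι : Type*} [Fintype ι] [DecidableEq ι]

lemma swapMatrix_mul_apply (X : Matrix (ι × ι) (ι × ι) ℂ) (p q : ι × ι) :
    (swapMatrix ι * X) p q = X p.swap q := by
  simp only [swapMatrix, ite_and, mul_apply, of_apply, ite_mul, one_mul, zero_mul,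
    Fintype.sum_prod_type, sum_ite_eq, mem_univ, ↓reduceIte]
  rfl

lemma mul_swapMatrix_apply (X : Matrix (ι × ι) (ι × ι) ℂ) (p q : ι × ι) :
    (X * swapMatrix ι) p q = X p q.swap := by
  simp only [swapMatrix, ite_and, mul_apply, of_apply, mul_ite, mul_one, mul_zero,
    Fintype.sum_prod_type, sum_ite_irrel, sum_ite_eq', mem_univ, ↓reduceIte, sum_const_zero]
  rfl

lemma isSelfAdjoint_swapMatrix : IsSelfAdjoint (swapMatrix ι) := by
  ext p q
  simp only [star_apply, swapMatrix, of_apply, apply_ite star, star_one, star_zero]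
  grind

lemma swapMatrix_mul_self : swapMatrix ι * swapMatrix ι = 1 := by
  ext p q
  rw [swapMatrix_mul_apply]
  simp [swapMatrix, one_apply, Prod.ext_iff, and_comm]

lemma swapMatrix_mul_kronecker_mul_swapMatrix (A B : Matrix ι ι ℂ) :
    swapMatrix ι * (A ⊗ₖ B) * swapMatrix ι = B ⊗ₖ A := by
  ext p q
  simp [mul_swapMatrix_apply, swapMatrix_mul_apply, mul_comm]

end Swap

/-- If the SWAP test on a density matrix `ρ` rejects with probability `α`
(accepts with probability `1 - α`), then the trace distance between the two
reduced states of `ρ` is at most `3√α`. -/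
theorem stmt_13 {ι : Type*} [Fintype ι] [DecidableEq ι]
    (ρ : Matrix (ι × ι) (ι × ι) ℂ) (hρ : ρ.PosSemidef) (htr : ρ.trace = 1)
    (α : ℝ) (hα0 : 0 ≤ α) (hα1 : α ≤ 1)
    (hacc : ((((2 : ℂ)⁻¹ • (1 + swapMatrix ι)) * ρ).trace).re = 1 - α) :
    traceDist (ptraceSnd ρ) (ptraceFst ρ) ≤ 3 * Real.sqrt α := by
  set P := (2 : ℂ)⁻¹ • (1 + swapMatrix ι)
  have hP : IsStarProjection P :=
    isSelfAdjoint_swapMatrix.isStarProjection_inv_two_smul_one_add swapMatrix_mul_self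
  have hΔ : (ptraceSnd ρ - ptraceFst ρ).trace = 0 := by
    rw [trace_sub, trace_ptraceSnd, trace_ptraceFst, sub_self]
  obtain ⟨M, hM, hdist⟩ :=
    (hρ.1.ptraceSnd.sub hρ.1.ptraceFst).exists_isStarProjection_traceNorm_eq hΔ
  set N := M ⊗ₖ 1 - 1 ⊗ₖ M
  have hN : N.IsHermitian :=
    (hM.kronecker (.one _)).isSelfAdjoint.sub ((IsStarProjection.one _).kronecker hM).isSelfAdjoint
  have hPNP : P * N * P = 0 := inv_two_smul_one_add_mul_mul_eq_zero swapMatrix_mul_self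
    (by simp [N, mul_sub, sub_mul, swapMatrix_mul_kronecker_mul_swapMatrix])
  have hMN : (M * (ptraceSnd ρ - ptraceFst ρ)).trace = (N * ρ).trace := by
    rw [mul_sub, trace_sub, trace_mul_ptraceSnd, trace_mul_ptraceFst, sub_mul, trace_sub]
  have hQρ : ((1 - P) * ρ).trace.re = α := by
    rw [sub_mul, one_mul, trace_sub, Complex.sub_re, htr, hacc, Complex.one_re, sub_sub_cancel]
  have hNρ := hρ.re_trace_mul_le_of_mul_mul_eq_zero hP hN hPNP hM.kronecker_sub_mul_self_le_one
  rw [hacc, hQρ, ← hMN] at hNρ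
  have h1 : √(1 - α) ≤ 1 := Real.sqrt_le_one.mpr (by linarith)
  have h2 : α ≤ √α := (Real.le_sqrt hα0 hα0).mpr (by nlinarith)
  rw [traceDist, hdist]
  nlinarith [Real.sqrt_nonneg α]

end
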